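/- arXiv:1304.6586 — 2 statements merged into one kernel-verified Lean document; each statement's English description precedes it below -/
import Mathlib

section
/- Let F be a field and K a subfield of F. Let f, h be formal power series over F. Suppose there exists n0 such that the coefficient of q^n in f is zero for all n < n0 and the coefficient of q^{n0} in f is nonzero. If every coefficient of f lies in K and every coefficient of the product f·h lies in K, then every coefficient of h lies in K. -/
/-!
Factor `f = X ^ n0 * g`. Then `g` has coefficients in `K` and a nonzero constant term, so it is
invertible in `F⟦X⟧` and its inverse again has coefficients in `K` (it is the image of the inverse
computed in `K⟦X⟧`). Since `g * h` has coefficients in `K` as well, so has `h = g⁻¹ * (g * h)`.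
-/

namespace PowerSeries

theorem coeff_mem_of_coeff_X_pow_mul_mem {R : Type*} [Semiring R] {S : Set R} {φ : R⟦X⟧} {k : ℕ}
    (h : ∀ n, coeff n (X ^ k * φ) ∈ S) (n : ℕ) : coeff n φ ∈ S := by
  simpa only [coeff_X_pow_mul] using h (n + k)

theorem map_inv {k l : Type*} [Field k] [Field l] (f : k →+* l) (φ : k⟦X⟧) :
    map f φ⁻¹ = (map f φ)⁻¹ := by
  by_cases hφ : constantCoeff φ = 0
  · rw [inv_eq_zero.mpr hφ, map_zero, eq_comm, inv_eq_zero, ← coeff_zero_eq_constantCoeff_apply,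
      coeff_map, coeff_zero_eq_constantCoeff_apply, hφ, map_zero]
  · have hfφ : constantCoeff (map f φ) ≠ 0 := by
      rwa [← coeff_zero_eq_constantCoeff_apply, coeff_map, coeff_zero_eq_constantCoeff_apply,
        map_ne_zero]
    rw [eq_inv_iff_mul_eq_one hfφ, ← map_mul, PowerSeries.inv_mul_cancel _ hφ, map_one]

variable {F : Type*} [Field F] (K : Subfield F)

theorem mem_range_map_subtype_iff {φ : F⟦X⟧} :
    φ ∈ (map K.subtype).range ↔ ∀ n, coeff n φ ∈ K := by
  constructor
  · rintro ⟨ψ, rfl⟩ n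
    simp only [coeff_map, Subfield.subtype_apply, SetLike.coe_mem]
  · intro hφ
    exact ⟨mk fun n => ⟨coeff n φ, hφ n⟩, by ext n; simp⟩

theorem inv_mem_range_map_subtype {φ : F⟦X⟧} (hφ : φ ∈ (map K.subtype).range) :
    φ⁻¹ ∈ (map K.subtype).range := by
  obtain ⟨ψ, rfl⟩ := hφ
  exact ⟨ψ⁻¹, map_inv _ ψ⟩

end PowerSeries

open PowerSeries

/-- If `K` is a subfield of a field `F`, `f, h ∈ F[[q]]`, `f` has some nonzero coefficient
(first nonzero at index `n0`), all coefficients of `f` lie in `K`, and all coefficients of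
`f * h` lie in `K`, then all coefficients of `h` lie in `K`. -/
theorem stmt1 {F : Type*} [Field F] (K : Subfield F) (f h : PowerSeries F) (n0 : ℕ)
    (hf0 : ∀ n < n0, PowerSeries.coeff (R := F) n f = 0)
    (hfn0 : PowerSeries.coeff (R := F) n0 f ≠ 0)
    (hfK : ∀ n, PowerSeries.coeff (R := F) n f ∈ K)
    (hprod : ∀ n, PowerSeries.coeff (R := F) n (f * h) ∈ K) :
    ∀ n, PowerSeries.coeff (R := F) n h ∈ K := by
  obtain ⟨g, rfl⟩ := X_pow_dvd_iff.mpr hf0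
  have hg0 : constantCoeff g ≠ 0 := by
    simpa only [← coeff_zero_eq_constantCoeff_apply, coeff_X_pow_mul', le_refl, if_true,
      Nat.sub_self] using hfn0
  have hgK : g ∈ (map K.subtype).range :=
    (mem_range_map_subtype_iff K).mpr (coeff_mem_of_coeff_X_pow_mul_mem hfK)
  have hghK : g * h ∈ (map K.subtype).range := by
    rw [mul_assoc] at hprod
    exact (mem_range_map_subtype_iff K).mpr (coeff_mem_of_coeff_X_pow_mul_mem hprod)
  have hh : h = g⁻¹ * (g * h) := by rw [← mul_assoc, PowerSeries.inv_mul_cancel _ hg0, one_mul]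
  rw [← mem_range_map_subtype_iff, hh]
  exact mul_mem (inv_mem_range_map_subtype K hgK) hghK
end

section
/- Let B and r be positive integers, let K₀ be a subfield of ℂ that is a finite extension of ℚ, and let f_1, …, f_r : ℕ → ℂ be linearly independent functions all of whose values lie in K₀. Suppose that for all α_1, …, α_r ∈ ℂ, if Σ_{i=1}^r α_i f_i(n) = 0 for every n with 1 ≤ n ≤ B, then Σ_{i=1}^r α_i f_i is the zero function. Let λ_1, …, λ_r ∈ ℂ and set f = Σ_{i=1}^r λ_i f_i. If f(n) is algebraic over ℚ for every n with 1 ≤ n ≤ B, then each λ_i is algebraic over ℚ, f(n) is algebraic over ℚ for every n ∈ ℕ, and there exists a subfield K_f of ℂ that is a finite extension of ℚ with f(n) ∈ K_f for all n ∈ ℕ. -/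
/-!
The truncations `(f_i(1), …, f_i(B))` are linearly independent by the Sturm-type property, so
the matrix `V` with these columns has a left inverse `G` over any field containing its entries.
Take for that field the number field `K_f` generated by `K₀` and `f(1), …, f(B)`: then
`λ = G (f(1), …, f(B))` has entries in `K_f`, hence so has every `f(n) = ∑ λ_i f_i(n)`.
-/

namespace Matrix

variable {m n : Type*} [Fintype m] [Fintype n] [DecidableEq n]

theorem exists_mul_eq_one_of_mulVec_injective {K : Type*} [Field K] {V : Matrix m n K}
    (hV : Function.Injective V.mulVec) : ∃ G : Matrix n m K, G * V = 1 := by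
  classical
  obtain ⟨g, hg⟩ := V.mulVecLin.exists_leftInverse_of_injective (LinearMap.ker_eq_bot.mpr hV)
  refine ⟨LinearMap.toMatrix' g, ?_⟩
  rw [← LinearMap.toMatrix'_toLin' V, ← LinearMap.toMatrix'_comp, Matrix.toLin'_apply', hg,
    LinearMap.toMatrix'_id]

omit [Fintype m] [DecidableEq n] in
theorem mulVec_injective_of_map {R S : Type*} [NonAssocSemiring R] [NonAssocSemiring S]
    {φ : R →+* S} (hφ : Function.Injective φ) {V : Matrix m n R}
    (hV : Function.Injective (V.map φ).mulVec) : Function.Injective V.mulVec := by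
  intro x y hxy
  have hmap : ∀ z, (V.map φ) *ᵥ (φ ∘ z) = φ ∘ (V *ᵥ z) :=
    fun z => funext fun i => (φ.map_mulVec V z i).symm
  have hcomp : φ ∘ x = φ ∘ y := hV (by rw [hmap, hmap, hxy])
  exact funext fun j => hφ (congrFun hcomp j)

theorem exists_eq_algebraMap_comp_of_mulVec_eq {K L : Type*} [Field K] [CommSemiring L]
    [Algebra K L] {V : Matrix m n K} (hV : Function.Injective V.mulVec) {c : n → L}
    {w : m → K} (h : V.map (algebraMap K L) *ᵥ c = algebraMap K L ∘ w) :
    ∃ d : n → K, c = algebraMap K L ∘ d := by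
  obtain ⟨G, hG⟩ := exists_mul_eq_one_of_mulVec_injective hV
  refine ⟨G *ᵥ w, ?_⟩
  calc c = (G.map (algebraMap K L) * V.map (algebraMap K L)) *ᵥ c := by
        rw [← Matrix.map_mul, hG, Matrix.map_one _ (map_zero _) (map_one _), one_mulVec]
    _ = G.map (algebraMap K L) *ᵥ (algebraMap K L ∘ w) := by rw [← mulVec_mulVec, h]
    _ = algebraMap K L ∘ (G *ᵥ w) := funext fun i => ((algebraMap K L).map_mulVec G w i).symm

end Matrix

theorem linearIndependent_truncation {R ι : Type*} [CommRing R] [Fintype ι] {B : ℕ}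
    {f : ι → ℕ → R} (hind : LinearIndependent R f)
    (hSturm : ∀ α : ι → R,
      (∀ n : ℕ, 1 ≤ n → n ≤ B → ∑ i, α i * f i n = 0) →
      (fun n : ℕ => ∑ i, α i * f i n) = 0) :
    LinearIndependent R (fun i (n : Fin B) => f i (n + 1)) := by
  rw [Fintype.linearIndependent_iff] at hind ⊢
  intro α hα
  refine hind α (funext fun n => ?_)
  have hvanish : ∀ n : ℕ, 1 ≤ n → n ≤ B → ∑ i, α i * f i n = 0 := by
    intro n h1 h2
    obtain ⟨k, rfl⟩ := Nat.exists_eq_add_of_le' h1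
    simpa [Finset.sum_apply] using congrFun hα ⟨k, by omega⟩
  simpa [Finset.sum_apply] using congrFun (hSturm α hvanish) n

theorem stmt6_general (B r : ℕ)
    (K₀ : Subfield ℂ) (hK₀ : FiniteDimensional ℚ K₀)
    (f : Fin r → ℕ → ℂ) (hval : ∀ i n, f i n ∈ K₀)
    (hind : LinearIndependent ℂ f)
    (hSturm : ∀ α : Fin r → ℂ,
      (∀ n : ℕ, 1 ≤ n → n ≤ B → ∑ i, α i * f i n = 0) →
      (fun n : ℕ => ∑ i, α i * f i n) = 0)
    (lam : Fin r → ℂ) (F : ℕ → ℂ) (hF : ∀ n, F n = ∑ i, lam i * f i n)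
    (halg : ∀ n : ℕ, 1 ≤ n → n ≤ B → IsAlgebraic ℚ (F n)) :
    (∀ i, IsAlgebraic ℚ (lam i)) ∧ (∀ n : ℕ, IsAlgebraic ℚ (F n)) ∧
      ∃ Kf : Subfield ℂ, FiniteDimensional ℚ Kf ∧ ∀ n : ℕ, F n ∈ Kf := by
  let K₀' : IntermediateField ℚ ℂ := K₀.toIntermediateField fun x => by simp
  let Kf := K₀' ⊔ IntermediateField.adjoin ℚ (F '' Set.Icc 1 B)
  have : FiniteDimensional ℚ K₀' := hK₀
  have : Finite (F '' Set.Icc 1 B) := ((Set.finite_Icc 1 B).image F).to_subtype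
  have : FiniteDimensional ℚ (IntermediateField.adjoin ℚ (F '' Set.Icc 1 B)) :=
    IntermediateField.finiteDimensional_adjoin
      fun _ ⟨n, ⟨h1, h2⟩, hx⟩ => hx ▸ (halg n h1 h2).isIntegral
  have hf_mem : ∀ i n, f i n ∈ Kf := fun i n => le_sup_left (a := K₀') (hval i n)
  let V : Matrix (Fin B) (Fin r) Kf := Matrix.of fun n i => ⟨f i (n + 1), hf_mem i _⟩
  have hV : Function.Injective (V.map (algebraMap Kf ℂ)).mulVec :=
    Matrix.mulVec_injective_iff.mpr (linearIndependent_truncation hind hSturm)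
  let w : Fin B → Kf := fun n => ⟨F (n + 1), le_sup_right (a := K₀')
    (IntermediateField.subset_adjoin ℚ _ ⟨n + 1, ⟨by omega, by omega⟩, rfl⟩)⟩
  obtain ⟨d, hd⟩ := Matrix.exists_eq_algebraMap_comp_of_mulVec_eq
    (Matrix.mulVec_injective_of_map (algebraMap Kf ℂ).injective hV) (c := lam) (w := w)
    (funext fun n => by simp [V, w, Matrix.mulVec, dotProduct, hF, mul_comm])
  have hlam_mem : ∀ i, lam i ∈ Kf := fun i => hd ▸ (d i).2
  have hF_mem : ∀ n, F n ∈ Kf := fun n =>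
    hF n ▸ sum_mem fun i _ => mul_mem (hlam_mem i) (hf_mem i n)
  have halg_of_mem : ∀ x ∈ Kf, IsAlgebraic ℚ x := fun x hx =>
    IntermediateField.isAlgebraic_iff.mp (Algebra.IsAlgebraic.isAlgebraic (⟨x, hx⟩ : Kf))
  exact ⟨fun i => halg_of_mem _ (hlam_mem i), fun n => halg_of_mem _ (hF_mem n),
    Kf.toSubfield, inferInstanceAs (FiniteDimensional ℚ Kf), hF_mem⟩

/-- Linear-algebra core of the main theorem: if `f_1, …, f_r : ℕ → ℂ` are linearly
independent, take values in a number field `K₀`, and satisfy the Sturm-type property that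
any linear combination vanishing on `1 ≤ n ≤ B` is zero, then for `f = ∑ λ_i f_i` with
`f(n)` algebraic for `1 ≤ n ≤ B`, the `λ_i` are algebraic, all `f(n)` are algebraic, and
there is a number field `K_f ⊆ ℂ` containing all `f(n)`. -/
theorem stmt6 (B r : ℕ) (hB : 0 < B) (hr : 0 < r)
    (K₀ : Subfield ℂ) (hK₀ : FiniteDimensional ℚ K₀)
    (f : Fin r → ℕ → ℂ) (hval : ∀ i n, f i n ∈ K₀)
    (hind : LinearIndependent ℂ f)
    (hSturm : ∀ α : Fin r → ℂ,
      (∀ n : ℕ, 1 ≤ n → n ≤ B → ∑ i, α i * f i n = 0) →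
      (fun n : ℕ => ∑ i, α i * f i n) = 0)
    (lam : Fin r → ℂ) (F : ℕ → ℂ) (hF : ∀ n, F n = ∑ i, lam i * f i n)
    (halg : ∀ n : ℕ, 1 ≤ n → n ≤ B → IsAlgebraic ℚ (F n)) :
    (∀ i, IsAlgebraic ℚ (lam i)) ∧ (∀ n : ℕ, IsAlgebraic ℚ (F n)) ∧
      ∃ Kf : Subfield ℂ, FiniteDimensional ℚ Kf ∧ ∀ n : ℕ, F n ∈ Kf :=
  stmt6_general B r K₀ hK₀ f hval hind hSturm lam F hF halg
end
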